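/- The braiding is equivariant: for representations (U,ρ_U) and (V,ρ_V) of g with tensor product structure ρ_{U,V} := ρ_U ⊙ 𝟙_V + 𝟙_U ⊙ ρ_V, the braiding intertwiner γ_{U,V} = {s_{U,V}} satisfies [ρ, γ_{U,V}] = 0, i.e. γ_{U,V} ρ_{U,V} = ρ_{V,U} γ_{U,V} (using ϱ_{γ_{U,V}} = 0). -/

import Mathlib

noncomputable section

namespace LMI

/-- A graded vector space, modelled by a homogeneous basis with degree function. -/
structure GVS where
  B : Type
  deg : B → ℤ

/-- Tensor product of graded vector spaces (product of bases, sum of degrees). -/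
def GVS.tens (U V : GVS) : GVS := ⟨U.B × V.B, fun p => U.deg p.1 + V.deg p.2⟩

variable (K : Type) [Field K]

/-- The sign (-1)^z. -/
def ksign (z : ℤ) : K := (-1 : K) ^ z.natAbs

/-- The Koszul sign of a permutation acting on homogeneous elements of degrees `d`. -/
def kperm {n : ℕ} (d : Fin n → ℤ) (σ : Equiv.Perm (Fin n)) : K :=
  ∏ p ∈ Finset.univ.filter (fun p : Fin n × Fin n => p.1 < p.2 ∧ σ p.2 < σ p.1),
    ksign K (d p.1 * d p.2)

/-- The signature of a permutation, as an element of K. -/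
def psign {n : ℕ} (σ : Equiv.Perm (Fin n)) : K := ((Equiv.Perm.sign σ : ℤ) : K)

/-- `(a, n-a)`-shuffles: permutations increasing on the first `a` and the last `n-a` positions. -/
def IsShuffle {n : ℕ} (a : ℕ) (σ : Equiv.Perm (Fin n)) : Prop :=
  ∀ k l : Fin n, k < l → ((l : ℕ) < a ∨ a ≤ (k : ℕ)) → σ k < σ l

instance {n a : ℕ} : DecidablePred (IsShuffle (n := n) a) := fun σ => by
  unfold IsShuffle; infer_instance

def shuffles (n a : ℕ) : Finset (Equiv.Perm (Fin n)) :=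
  Finset.univ.filter (IsShuffle a)

/-- Total degree of a family of basis elements. -/
def dsum (g : GVS) {m : ℕ} (ξ : Fin m → g.B) : ℤ := ∑ k, g.deg (ξ k)

def firstPart {β : Type} {n : ℕ} (a : Fin (n + 1)) (ξ : Fin n → β) : Fin (a : ℕ) → β :=
  fun t => ξ ⟨t, by have h1 := t.isLt; have h2 := a.isLt; omega⟩

def lastPart {β : Type} {n : ℕ} (a : Fin (n + 1)) (ξ : Fin n → β) : Fin (n - (a : ℕ)) → β :=
  fun t => ξ ⟨(a : ℕ) + t, by have h1 := t.isLt; have h2 := a.isLt; omega⟩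

/-- A "pre-intertwiner" `U ⇝ V`: a family of maps `g^{⊗n} ⊗ U → V`, given on bases. -/
abbrev Pre (g U V : GVS) : Type := (i : ℕ) → (Fin i → g.B) → U.B → (V.B →₀ K)

/-- A family of structure maps `ℓ^i : g^{⊗i} → g`, given on bases. -/
abbrev LFam (g : GVS) : Type := (i : ℕ) → (Fin i → g.B) → (g.B →₀ K)

/-- Tensor product of two vectors, in basis coordinates. -/
def tensF {U V : GVS} (x : U.B →₀ K) (y : V.B →₀ K) : (U.tens V).B →₀ K :=
  x.sum fun b c => y.sum fun b' c' => Finsupp.single (b, b') (c * c')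

/-- Linear extension of a map defined on a basis. -/
def lf {α β : Type} (φ : α → (β →₀ K)) (x : α →₀ K) : β →₀ K :=
  x.sum fun a c => c • φ a

/-- Juxtaposition (composition) of intertwiners:
`(G F)^i := Σ_{j̃+k=i} (-1)^{(|G|-j̃)k̃} G^j (1_{j̃} ⊗ F^k)(Σ_{j̃,k̃} ⊗ 1_U)`. -/
def juxt {g U V W : GVS} (nG nF : ℤ) (G : Pre K g V W) (F : Pre K g U V) : Pre K g U W :=
  fun n ξ u =>
    ∑ a : Fin (n + 1), ∑ σ ∈ shuffles n (a : ℕ),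
      (psign K σ * kperm K (g.deg ∘ ξ) σ
        * ksign K ((nF - ((n : ℤ) - ((a : ℕ) : ℤ))) * dsum g (firstPart a (ξ ∘ σ)))
        * ksign K ((nG - ((a : ℕ) : ℤ)) * ((n : ℤ) - ((a : ℕ) : ℤ))))
      • lf K (G (a : ℕ) (firstPart a (ξ ∘ σ))) (F (n - (a : ℕ)) (lastPart a (ξ ∘ σ)) u)

/-- The odot (monoidal) product of intertwiners:
`(F ⊙ G)^i := Σ (-1)^{(|F|-j̃)k̃}(F^j ⊗ G^k)(1_{j̃} ⊗ s_{k̃,U} ⊗ 1_V)(Σ_{j̃,k̃} ⊗ 1_{U⊗V})`. -/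
def odot {g U U' V V' : GVS} (nF nG : ℤ) (F : Pre K g U U') (G : Pre K g V V') :
    Pre K g (U.tens V) (U'.tens V') :=
  fun n ξ p =>
    ∑ a : Fin (n + 1), ∑ σ ∈ shuffles n (a : ℕ),
      (psign K σ * kperm K (g.deg ∘ ξ) σ
        * ksign K (U.deg p.1 * dsum g (lastPart a (ξ ∘ σ)))
        * ksign K ((nG - ((n : ℤ) - ((a : ℕ) : ℤ))) * (dsum g (firstPart a (ξ ∘ σ)) + U.deg p.1))
        * ksign K ((nF - ((a : ℕ) : ℤ)) * ((n : ℤ) - ((a : ℕ) : ℤ))))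
      • tensF K (F (a : ℕ) (firstPart a (ξ ∘ σ)) p.1) (G (n - (a : ℕ)) (lastPart a (ξ ∘ σ)) p.2)

/-- The identity intertwiner `𝟙_U`. -/
def oneI {g : GVS} (U : GVS) : Pre K g U U :=
  fun n _ u => if n = 0 then Finsupp.single u 1 else 0

/-- The homotopy components `ϱ_F^i := (-1)^i F^{i+1} : g^{⊗i} ⊗ U → V[|F|-i]`. -/
def varr {g U V : GVS} (F : Pre K g U V) : Pre K g (g.tens U) V :=
  fun n ξ p => ksign K ((n : ℤ) + 1) • F (n + 1) (Fin.snoc ξ p.1) p.2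

/-- The intertwiner `ℓ_U : U ⇝ (g ⊗ U)[2]` with components `ℓ^{ĩ} ⊗ 1_U`. -/
def ellU {g : GVS} (L : LFam K g) (U : GVS) : Pre K g U (g.tens U) :=
  fun n ξ u => (L n ξ).sum fun y c => Finsupp.single (y, u) c

/-- The braiding intertwiner `γ_{U,V}` with sole component the Koszul swap. -/
def gammaI {g : GVS} (U V : GVS) : Pre K g (U.tens V) (V.tens U) :=
  fun n _ p => if n = 0 then ksign K (U.deg p.1 * V.deg p.2) • Finsupp.single (p.2, p.1) 1 else 0

/-- The adjoint representation `ρ_g^i = (-1)^{ĩ} ℓ^i`. -/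
def adj {g : GVS} (L : LFam K g) : Pre K g g g :=
  fun n ξ x => ksign K (n : ℤ) • L (n + 1) (Fin.snoc ξ x)

/-- The action map `ϱ_U : g ⊙ U ⇝ U` with components `ϱ_U^i = (-1)^{ĩ} ρ_U^{i+1}`. -/
def actU {g U : GVS} (ρU : Pre K g U U) : Pre K g (g.tens U) U := - varr K ρU

/-- The hom-differential `[ρ,F] := ρ_V F - (-1)^{|F|} F ρ_U - ϱ_F ℓ_U`. -/
def brkt {g U V : GVS} (L : LFam K g) (ρU : Pre K g U U) (ρV : Pre K g V V)
    (nf : ℤ) (F : Pre K g U V) : Pre K g U V :=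
  juxt K 1 nf ρV F - ksign K nf • juxt K nf 1 F ρU
    - juxt K (nf - 1) 2 (varr K F) (ellU K L U)

/-- The tensor product structure map `ρ_{U,V} := ρ_U ⊙ 𝟙_V + 𝟙_U ⊙ ρ_V`. -/
def rhoT {g U V : GVS} (ρU : Pre K g U U) (ρV : Pre K g V V) :
    Pre K g (U.tens V) (U.tens V) :=
  odot K 1 0 ρU (oneI K V) + odot K 0 1 (oneI K U) ρV

/-- `F` is an intertwiner `U ⇝ V[nf]`: graded of degree `nf` and fully
(Koszul-)skew-symmetric in the `g`-entries. -/
def IsIntertwiner (g U V : GVS) (nf : ℤ) (F : Pre K g U V) : Prop :=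
  (∀ (n : ℕ) (ξ : Fin n → g.B) (u : U.B), ∀ b ∈ (F n ξ u).support,
      V.deg b = dsum g ξ + U.deg u + nf - n) ∧
  (∀ (n : ℕ) (ξ : Fin n → g.B) (u : U.B) (σ : Equiv.Perm (Fin n)),
      F n (ξ ∘ σ) u = (psign K σ * kperm K (g.deg ∘ ξ) σ) • F n ξ u)

/-- The generalised Jacobi identity `Σ_{j̃+k=i} (-1)^{j̃} ℓ^j(ℓ^k ⊗ 1_{j̃})Σ_{k,j̃} = 0`. -/
def GJacobi (g : GVS) (L : LFam K g) : Prop :=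
  ∀ (n : ℕ) (ξ : Fin n → g.B),
    (∑ a : Fin (n + 1), ∑ σ ∈ shuffles n (a : ℕ),
      (psign K σ * kperm K (g.deg ∘ ξ) σ * ksign K ((n : ℤ) - ((a : ℕ) : ℤ)))
      • ((L (a : ℕ) (firstPart a (ξ ∘ σ))).sum
          fun y c => c • L (n - (a : ℕ) + 1) (Fin.cons y (lastPart a (ξ ∘ σ))))) = 0

/-- `(g, L)` is a homotopy Lie algebra: brackets `ℓ^i : Λ^i g → g[2-i]` (`i ≥ 1`)
satisfying the generalised Jacobi identity. -/
def IsHLA (g : GVS) (L : LFam K g) : Prop :=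
  (L 0 = fun _ => 0) ∧
  (∀ (i : ℕ) (ξ : Fin i → g.B), ∀ b ∈ (L i ξ).support, g.deg b = dsum g ξ + 2 - i) ∧
  (∀ (i : ℕ) (ξ : Fin i → g.B) (σ : Equiv.Perm (Fin i)),
      L i (ξ ∘ σ) = (psign K σ * kperm K (g.deg ∘ ξ) σ) • L i ξ) ∧
  GJacobi K g L

/-- `(U, ρU)` is a representation of `(g, L)`: a degree 1 intertwiner
with `ρ_U ρ_U = ϱ_{ρ_U} ℓ_U`. -/
def IsRep (g : GVS) (L : LFam K g) (U : GVS) (ρU : Pre K g U U) : Prop :=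
  IsIntertwiner K g U U 1 ρU ∧
  juxt K 1 1 ρU ρU = juxt K 0 2 (varr K ρU) (ellU K L U)

/-- Transport an intertwiner along an identification of domain bases. -/
def transp {g U U' V : GVS} (e : U.B ≃ U'.B) (F : Pre K g U' V) : Pre K g U V :=
  fun n ξ u => F n ξ (e u)

/-- Transport an intertwiner along an identification of codomain bases. -/
def transpC {g U V V' : GVS} (e : V.B ≃ V'.B) (F : Pre K g U V) : Pre K g U V' :=
  fun n ξ u => Finsupp.equivMapDomain e (F n ξ u)

/-!
The braiding `γ` has only an arity-zero component, the Koszul swap. Hence `ϱ_γ = 0`, and in each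
of the two compositions `ρ_{V⊗U} γ` and `γ ρ_{U⊗V}` only the term with the trivial shuffle
survives: the first is `(-1)^{|u||v|} ρ_{V⊗U}(v ⊗ u)`, the second is the swap of
`ρ_U u ⊗ v ± u ⊗ ρ_V v`. As `ρ_U` and `ρ_V` are homogeneous of degree one, swapping these
homogeneous tensors produces exactly the Koszul signs of `ρ_{V⊗U}(v ⊗ u)`, up to an even exponent.
-/

lemma ksign_eq_negOnePow (z : ℤ) : ksign K z = ((z.negOnePow : ℤ) : K) := by
  rcases z.even_or_odd with h | h
  · rw [ksign, h.natAbs.neg_one_pow, Int.negOnePow_even z h, Units.val_one, Int.cast_one]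
  · rw [ksign, h.natAbs.neg_one_pow, Int.negOnePow_odd z h, Units.val_neg, Units.val_one,
      Int.cast_neg, Int.cast_one]

@[simp]
lemma ksign_zero : ksign K 0 = 1 := by
  simp [ksign]

lemma ksign_add (x y : ℤ) : ksign K (x + y) = ksign K x * ksign K y := by
  simp [ksign_eq_negOnePow, Int.negOnePow_add]

lemma ksign_add_two_mul (x y : ℤ) : ksign K (x + 2 * y) = ksign K x := by
  simp [ksign_eq_negOnePow, Int.negOnePow_add]

@[simp]
lemma psign_one {n : ℕ} : psign K (1 : Equiv.Perm (Fin n)) = 1 := by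
  simp [psign]

@[simp]
lemma kperm_one {n : ℕ} (d : Fin n → ℤ) : kperm K d 1 = 1 := by
  unfold kperm
  rw [Finset.filter_false_of_mem fun p _ h => h.1.asymm h.2, Finset.prod_empty]

lemma perm_eq_one_of_strictMono {α : Type*} [LinearOrder α] [WellFoundedLT α]
    {σ : Equiv.Perm α} (h : StrictMono σ) : σ = 1 :=
  Equiv.ext fun k => DFunLike.congr_fun
    (Subsingleton.elim (h.orderIsoOfSurjective σ σ.surjective) (OrderIso.refl _)) k

lemma shuffles_zero (n : ℕ) : shuffles n 0 = {1} := by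
  ext σ
  simp only [shuffles, Finset.mem_filter, Finset.mem_univ, true_and, Finset.mem_singleton]
  exact ⟨fun h => perm_eq_one_of_strictMono fun k l hkl => h k l hkl (.inr k.val.zero_le),
    fun h k l hkl _ => by simpa [h] using hkl⟩

lemma shuffles_self (n : ℕ) : shuffles n n = {1} := by
  ext σ
  simp only [shuffles, Finset.mem_filter, Finset.mem_univ, true_and, Finset.mem_singleton]
  exact ⟨fun h => perm_eq_one_of_strictMono fun k l hkl => h k l hkl (.inl l.isLt),
    fun h k l hkl _ => by simpa [h] using hkl⟩

lemma sum_sum_shuffles_eq_zero_index {M : Type*} [AddCommMonoid M] {n : ℕ}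
    (φ : Fin (n + 1) → Equiv.Perm (Fin n) → M) (h : ∀ a σ, a ≠ 0 → φ a σ = 0) :
    ∑ a : Fin (n + 1), ∑ σ ∈ shuffles n a, φ a σ = φ 0 1 := by
  rw [Fintype.sum_eq_single 0 fun a ha => Finset.sum_eq_zero fun σ _ => h a σ ha]
  simp [shuffles_zero]

lemma sum_sum_shuffles_eq_last_index {M : Type*} [AddCommMonoid M] {n : ℕ}
    (φ : Fin (n + 1) → Equiv.Perm (Fin n) → M) (h : ∀ a σ, a ≠ Fin.last n → φ a σ = 0) :
    ∑ a : Fin (n + 1), ∑ σ ∈ shuffles n a, φ a σ = φ (Fin.last n) 1 := by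
  rw [Fintype.sum_eq_single (Fin.last n) fun a ha => Finset.sum_eq_zero fun σ _ => h a σ ha]
  simp [shuffles_self]

@[simp]
lemma firstPart_last {β : Type} {n : ℕ} (ξ : Fin n → β) : firstPart (Fin.last n) ξ = ξ := rfl

@[simp]
lemma lastPart_zero {β : Type} {n : ℕ} (ξ : Fin n → β) : lastPart 0 ξ = ξ :=
  funext fun _ => congrArg ξ (Fin.ext (Nat.zero_add _))

lemma dsum_of_eq_zero (g : GVS) {m : ℕ} (h : m = 0) (ξ : Fin m → g.B) : dsum g ξ = 0 := by
  subst h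
  simp [dsum]

lemma dsum_firstPart_zero (g : GVS) {n : ℕ} (ξ : Fin n → g.B) : dsum g (firstPart 0 ξ) = 0 :=
  dsum_of_eq_zero g (Fin.val_zero _) _

lemma dsum_lastPart_last (g : GVS) {n : ℕ} (ξ : Fin n → g.B) :
    dsum g (lastPart (Fin.last n) ξ) = 0 :=
  dsum_of_eq_zero g (Nat.sub_self n) _

section LinearExtension

variable {α β : Type}

lemma lf_eq_linearCombination (φ : α → β →₀ K) : lf K φ = Finsupp.linearCombination K φ :=
  funext fun x => (Finsupp.linearCombination_apply K x).symm

lemma lf_add (φ : α → β →₀ K) (x y : α →₀ K) : lf K φ (x + y) = lf K φ x + lf K φ y := by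
  simp only [lf_eq_linearCombination, map_add]

lemma lf_smul (φ : α → β →₀ K) (c : K) (x : α →₀ K) : lf K φ (c • x) = c • lf K φ x := by
  simp only [lf_eq_linearCombination, map_smul]

lemma lf_single (φ : α → β →₀ K) (a : α) (c : K) : lf K φ (Finsupp.single a c) = c • φ a := by
  simp only [lf_eq_linearCombination, Finsupp.linearCombination_single]

@[simp]
lemma lf_zero_left (x : α →₀ K) : lf K (fun _ => (0 : β →₀ K)) x = 0 := by
  simp [lf]

@[simp]
lemma lf_zero_right (φ : α → β →₀ K) : lf K φ 0 = 0 := by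
  simp [lf]

end LinearExtension

section Tensor

variable {U V : GVS}

/- The pair `(b, b')` typed as a basis element of `U.tens V`: `simp` and `rw` do not unfold
`GVS.tens` to match `U.B × V.B` against `(U.tens V).B`. -/
def tensMk (b : U.B) (b' : V.B) : (U.tens V).B := (b, b')

@[simp]
lemma tensMk_fst (b : U.B) (b' : V.B) : (tensMk b b').1 = b := rfl

@[simp]
lemma tensMk_snd (b : U.B) (b' : V.B) : (tensMk b b').2 = b' := rfl

lemma tensF_eq_sum (x : U.B →₀ K) (y : V.B →₀ K) :
    tensF K x y = x.sum fun b c => y.sum fun b' c' => Finsupp.single (tensMk b b') (c * c') :=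
  rfl

lemma lf_tensF {β : Type} (φ : (U.tens V).B → β →₀ K) (x : U.B →₀ K) (y : V.B →₀ K) :
    lf K φ (tensF K x y) = x.sum fun b c => y.sum fun b' c' => (c * c') • φ (tensMk b b') := by
  simp only [tensF, lf_eq_linearCombination, map_finsuppSum]
  exact Finsupp.sum_congr fun b _ => Finsupp.sum_congr fun b' _ =>
    Finsupp.linearCombination_single K (v := φ) _ (tensMk b b')

def koszulSwap (U V : GVS) : (U.tens V).B → (V.tens U).B →₀ K :=
  fun p => ksign K (U.deg p.1 * V.deg p.2) • Finsupp.single (tensMk p.2 p.1) 1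

lemma lf_koszulSwap_tensF {x : U.B →₀ K} {y : V.B →₀ K} {d e : ℤ}
    (hx : ∀ b ∈ x.support, U.deg b = d) (hy : ∀ b ∈ y.support, V.deg b = e) :
    lf K (koszulSwap K U V) (tensF K x y) = ksign K (d * e) • tensF K y x := by
  rw [lf_tensF, tensF_eq_sum]
  simp only [Finsupp.smul_sum]
  rw [Finsupp.sum_comm]
  refine Finsupp.sum_congr fun b' hb' => Finsupp.sum_congr fun b hb => ?_
  simp only [koszulSwap, tensMk_fst, tensMk_snd, hx b hb, hy b' hb']
  rw [smul_comm, Finsupp.smul_single_one, mul_comm (x b)]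

lemma deg_eq_of_mem_support_single {W : GVS} (w : W.B) :
    ∀ b ∈ (Finsupp.single w (1 : K)).support, W.deg b = W.deg w := fun _ hb => by
  rw [Finset.mem_singleton.mp (Finsupp.support_single_subset hb)]

end Tensor

section Strict

variable {g U U' V V' W : GVS}

def strict (f : U.B → V.B →₀ K) : Pre K g U V :=
  fun n _ u => if n = 0 then f u else 0

lemma gammaI_eq_strict : gammaI K U V = strict (g := g) K (koszulSwap K U V) := rfl

lemma oneI_eq_strict : oneI K U = strict (g := g) K fun u => Finsupp.single u 1 := rfl

lemma varr_strict (f : U.B → V.B →₀ K) : varr K (strict (g := g) K f) = 0 := by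
  funext n ξ p
  simp [varr, strict]

lemma juxt_zero_left (nG nF : ℤ) (F : Pre K g U V) : juxt K nG nF (0 : Pre K g V W) F = 0 := by
  funext n ξ u
  simp [juxt, Pi.zero_def]

lemma juxt_strict_right (nG nF : ℤ) (G : Pre K g V W) (f : U.B → V.B →₀ K) (n : ℕ)
    (ξ : Fin n → g.B) (u : U.B) :
    juxt K nG nF G (strict K f) n ξ u = ksign K (nF * dsum g ξ) • lf K (G n ξ) (f u) := by
  unfold juxt
  rw [sum_sum_shuffles_eq_last_index]
  · simp [strict]
  · intro a σ ha
    have : n - (a : ℕ) ≠ 0 := by have := Fin.val_lt_last ha; omega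
    simp [strict, this]

lemma juxt_strict_left (nG nF : ℤ) (f : V.B → W.B →₀ K) (F : Pre K g U V) (n : ℕ)
    (ξ : Fin n → g.B) (u : U.B) :
    juxt K nG nF (strict K f) F n ξ u = ksign K (nG * n) • lf K f (F n ξ u) := by
  unfold juxt
  rw [sum_sum_shuffles_eq_zero_index]
  · simp only [Equiv.Perm.coe_one, Function.comp_id]
    rw [dsum_firstPart_zero]
    simp [strict, lf]
  · intro a σ ha
    have : (a : ℕ) ≠ 0 := Fin.val_ne_of_ne ha
    simp [strict, lf, this]

lemma odot_strict_right (nF nG : ℤ) (F : Pre K g U U') (f : V.B → V'.B →₀ K) (n : ℕ)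
    (ξ : Fin n → g.B) (p : (U.tens V).B) :
    odot K nF nG F (strict K f) n ξ p
      = ksign K (nG * (dsum g ξ + U.deg p.1)) • tensF K (F n ξ p.1) (f p.2) := by
  unfold odot
  rw [sum_sum_shuffles_eq_last_index]
  · simp only [Equiv.Perm.coe_one, Function.comp_id]
    rw [dsum_lastPart_last]
    simp [strict]
  · intro a σ ha
    have : n - (a : ℕ) ≠ 0 := by have := Fin.val_lt_last ha; omega
    simp [strict, this, tensF]

lemma odot_strict_left (nF nG : ℤ) (f : U.B → U'.B →₀ K) (G : Pre K g V V') (n : ℕ)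
    (ξ : Fin n → g.B) (p : (U.tens V).B) :
    odot K nF nG (strict K f) G n ξ p
      = ksign K (U.deg p.1 * dsum g ξ + (nG - n) * U.deg p.1 + nF * n)
          • tensF K (f p.1) (G n ξ p.2) := by
  unfold odot
  rw [sum_sum_shuffles_eq_zero_index]
  · simp only [Equiv.Perm.coe_one, Function.comp_id]
    rw [dsum_firstPart_zero]
    simp [strict, ksign_add]
  · intro a σ ha
    have : (a : ℕ) ≠ 0 := Fin.val_ne_of_ne ha
    simp [strict, this, tensF]

end Strict

section Braiding

variable {g U V : GVS}

def IsGraded (nf : ℤ) (F : Pre K g U V) : Prop :=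
  ∀ (n : ℕ) (ξ : Fin n → g.B) (u : U.B), ∀ b ∈ (F n ξ u).support,
    V.deg b = dsum g ξ + U.deg u + nf - n

lemma rhoT_apply (ρU : Pre K g U U) (ρV : Pre K g V V) (n : ℕ) (ξ : Fin n → g.B)
    (p : (U.tens V).B) :
    rhoT K ρU ρV n ξ p
      = tensF K (ρU n ξ p.1) (Finsupp.single p.2 1)
        + ksign K (U.deg p.1 * (dsum g ξ + 1 - n))
          • tensF K (Finsupp.single p.1 1) (ρV n ξ p.2) := by
  rw [rhoT, oneI_eq_strict, oneI_eq_strict, Pi.add_apply, Pi.add_apply, Pi.add_apply,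
    odot_strict_right, odot_strict_left, zero_mul, ksign_zero, one_smul]
  congr 3
  ring

lemma lf_koszulSwap_rhoT {ρU : Pre K g U U} {ρV : Pre K g V V}
    (hU : IsGraded K 1 ρU) (hV : IsGraded K 1 ρV) (n : ℕ) (ξ : Fin n → g.B) (p : (U.tens V).B) :
    lf K (koszulSwap K U V) (rhoT K ρU ρV n ξ p)
      = ksign K (U.deg p.1 * V.deg p.2) • rhoT K ρV ρU n ξ (tensMk p.2 p.1) := by
  rw [rhoT_apply, rhoT_apply, lf_add, lf_smul,
    lf_koszulSwap_tensF K (hU n ξ _) (deg_eq_of_mem_support_single K _),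
    lf_koszulSwap_tensF K (deg_eq_of_mem_support_single K _) (hV n ξ _)]
  simp only [tensMk_fst, tensMk_snd, smul_add, smul_smul, ← ksign_add]
  rw [add_comm]
  congr 2
  · rw [← ksign_add_two_mul K (U.deg p.1 * V.deg p.2) (U.deg p.1 * (dsum g ξ + 1 - n))]
    congr 1
    ring
  · congr 1
    ring

end Braiding

theorem gamma_equivariant {g U V : GVS} (L : LFam K g)
    (ρU : Pre K g U U) (ρV : Pre K g V V)
    (hU : IsRep K g L U ρU) (hV : IsRep K g L V ρV) :
    brkt K L (rhoT K ρU ρV) (rhoT K ρV ρU) 0 (gammaI K U V) = 0 := by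
  funext n ξ p
  have hϱ : varr K (gammaI K U V) = (0 : Pre K g _ _) := varr_strict K _
  have hργ : juxt K 1 0 (rhoT K ρV ρU) (gammaI K U V) n ξ p
      = ksign K (U.deg p.1 * V.deg p.2) • rhoT K ρV ρU n ξ (tensMk p.2 p.1) := by
    rw [gammaI_eq_strict, juxt_strict_right, zero_mul, ksign_zero, one_smul, koszulSwap,
      lf_smul, lf_single, one_smul]
  have hγρ : juxt K 0 1 (gammaI K U V) (rhoT K ρU ρV) n ξ p
      = ksign K (U.deg p.1 * V.deg p.2) • rhoT K ρV ρU n ξ (tensMk p.2 p.1) := by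
    rw [gammaI_eq_strict, juxt_strict_left, zero_mul, ksign_zero, one_smul,
      lf_koszulSwap_rhoT K hU.1.1 hV.1.1]
  simp only [brkt, Pi.sub_apply, hϱ, juxt_zero_left, hργ, hγρ, ksign_zero,
    one_smul, sub_self, Pi.zero_apply]

end LMI
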